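/- arXiv:2406.16208 — 4 statements merged into one kernel-verified Lean document; each statement's English description precedes it below -/
import Mathlib

section
/- Let (p,q) ∈ ℝ² satisfy the Diophantine condition and let τ ∈ ℂ with Im τ > 0. Then for every nonzero σ = (σ₁,σ₂) ∈ ℂ² there exists λ = (λ₁,λ₂) in Λ₀ such that the scalar product ⟨σ,λ⟩ = σ₁λ₁ + σ₂λ₂ is not an integer. (By the toroidal group criterion, this means ℂ²/Λ₀ is a toroidal group.) -/
/-! If all pairings with `Λ₀` were integers, the pairings with the generators `(0,1)` and `(1,p)`
force `σ = (k₂ - k₁ p, k₁)` with `k₁, k₂ ∈ ℤ`, so `σ₁` is real. Since `1` and `τ` are linearly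
independent over `ℝ`, integrality of the pairing with `(τ, q)` gives `k₁ p = k₂` and
`k₁ q ∈ ℤ`, i.e. `k₁ (p + q i)` is a Gaussian integer. The Diophantine condition forbids this
unless `k₁ = 0`, and then `σ = 0`. -/

open Complex

/-- A pair `(p, q)` of real numbers satisfies the Diophantine condition. -/
def DiophantineCondition (p q : ℝ) : Prop :=
  ∃ ϑ : ℝ, 0 < ϑ ∧ ∃ A : ℝ, 0 < A ∧ ∀ n : ℕ, 0 < n → ∀ μ ν : ℤ,
    A * (n : ℝ) ^ (-ϑ) ≤
      ‖(n : ℂ) * ((p : ℂ) + (q : ℂ) * Complex.I) - ((μ : ℂ) + (ν : ℂ) * Complex.I)‖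

/-- The lattice `Λ₀`: the additive subgroup of `ℂ²` generated by `(0,1)`, `(1,p)`, `(τ,q)`. -/
noncomputable def Lambda0 (p q : ℝ) (τ : ℂ) : AddSubgroup (ℂ × ℂ) :=
  AddSubgroup.closure {((0 : ℂ), (1 : ℂ)), ((1 : ℂ), (p : ℂ)), (τ, (q : ℂ))}

theorem DiophantineCondition.natCast_mul_ne {p q : ℝ} (hpq : DiophantineCondition p q)
    {n : ℕ} (hn : 0 < n) (μ ν : ℤ) :
    (n : ℂ) * (p + q * I) ≠ μ + ν * I := by
  obtain ⟨ϑ, -, A, hA, hdio⟩ := hpq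
  intro h
  have hpos : 0 < A * (n : ℝ) ^ (-ϑ) :=
    mul_pos hA (Real.rpow_pos_of_pos (by exact_mod_cast hn) _)
  have := hdio n hn μ ν
  rw [h, sub_self, norm_zero] at this
  linarith

theorem DiophantineCondition.intCast_mul_ne {p q : ℝ} (hpq : DiophantineCondition p q)
    {k : ℤ} (hk : k ≠ 0) (μ ν : ℤ) :
    (k : ℂ) * (p + q * I) ≠ μ + ν * I := by
  obtain ⟨n, rfl | rfl⟩ := Int.eq_nat_or_neg k
  · exact_mod_cast hpq.natCast_mul_ne (by omega) μ ν
  · intro h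
    apply hpq.natCast_mul_ne (n := n) (by omega) (-μ) (-ν)
    push_cast at h ⊢
    linear_combination -h

theorem Complex.eq_zero_and_eq_of_ofReal_mul_add_eq {τ : ℂ} (hτ : τ.im ≠ 0) {a b c : ℝ}
    (h : (a : ℂ) * τ + b = c) : a = 0 ∧ b = c := by
  have him := congrArg im h
  have hre := congrArg re h
  simp only [add_im, add_re, re_ofReal_mul, im_ofReal_mul, ofReal_im, ofReal_re, add_zero]
    at him hre
  have ha : a = 0 := (mul_eq_zero.mp him).resolve_right hτ
  exact ⟨ha, by simpa [ha] using hre⟩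

theorem eq_zero_of_pairings_with_generators_eq_intCast {p q : ℝ} {τ : ℂ}
    (hpq : ∀ k : ℤ, k ≠ 0 → ∀ μ ν : ℤ, (k : ℂ) * (p + q * I) ≠ μ + ν * I) (hτ : τ.im ≠ 0)
    {σ : ℂ × ℂ} {k₁ k₂ k₃ : ℤ} (h₁ : (k₁ : ℂ) = σ.2) (h₂ : (k₂ : ℂ) = σ.1 + σ.2 * p)
    (h₃ : (k₃ : ℂ) = σ.1 * τ + σ.2 * q) : σ = 0 := by
  have hσ₁ : σ.1 = ((k₂ - k₁ * p : ℝ) : ℂ) := by push_cast; linear_combination -h₂ + p * h₁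
  have hτ_rel : ((k₂ - k₁ * p : ℝ) : ℂ) * τ + ((k₁ * q : ℝ) : ℂ) = (k₃ : ℝ) := by
    rw [← hσ₁]; push_cast; linear_combination -h₃ + q * h₁
  obtain ⟨hp, hq⟩ := Complex.eq_zero_and_eq_of_ofReal_mul_add_eq hτ hτ_rel
  have hk₁ : k₁ = 0 := by
    by_contra hk₁
    apply hpq k₁ hk₁ k₂ k₃
    have hp' : ((k₁ * p : ℝ) : ℂ) = k₂ := by exact_mod_cast (sub_eq_zero.mp hp).symm
    have hq' : ((k₁ * q : ℝ) : ℂ) = k₃ := by exact_mod_cast hq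
    push_cast at hp' hq'
    linear_combination hp' + I * hq'
  subst hk₁
  have hk₂ : k₂ = 0 := by simpa using hp
  subst hk₂
  exact Prod.ext (by simpa using hσ₁) (by simpa using h₁.symm)

/-- If `(p, q)` satisfies the Diophantine condition and `Im τ > 0`, then for every nonzero
`σ ∈ ℂ²` there exists `λ ∈ Λ₀` whose scalar product `σ₁λ₁ + σ₂λ₂` with `σ` is not an
integer; by the toroidal group criterion, `ℂ²/Λ₀` is a toroidal group. -/
theorem exists_nonintegral_pairing_of_diophantine (p q : ℝ) (τ : ℂ)
    (hpq : DiophantineCondition p q) (hτ : 0 < τ.im) :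
    ∀ σ : ℂ × ℂ, σ ≠ 0 →
      ∃ l ∈ Lambda0 p q τ, ¬ ∃ k : ℤ, (k : ℂ) = σ.1 * l.1 + σ.2 * l.2 := by
  intro σ hσ
  by_contra! h
  have hgen : ∀ l ∈ ({(0, 1), (1, (p : ℂ)), (τ, (q : ℂ))} : Set (ℂ × ℂ)), l ∈ Lambda0 p q τ :=
    fun _ hl => AddSubgroup.subset_closure hl
  obtain ⟨k₁, h₁⟩ := h _ (hgen (0, 1) (by simp))
  obtain ⟨k₂, h₂⟩ := h _ (hgen (1, p) (by simp))
  obtain ⟨k₃, h₃⟩ := h _ (hgen (τ, q) (by simp))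
  simp only [mul_zero, mul_one, zero_add] at h₁ h₂
  exact hσ (eq_zero_of_pairings_with_generators_eq_intCast
    (fun _ hk => hpq.intCast_mul_ne hk) hτ.ne' h₁ h₂ h₃)
end

section
/- Let p,q ∈ ℝ and τ ∈ ℂ with Im τ > 0, and let H be the Hermitian form on ℂ² defined by H(x,y) = x₁·conj(y₁)/Im τ for x=(x₁,x₂), y=(y₁,y₂) ∈ ℂ². Then: (i) for all λ, μ ∈ Λ₀ the imaginary part Im H(λ,μ) is an integer; and (ii) for every nonzero x ∈ ℂ, H((x,0),(x,0)) is a positive real number (equal to |x|²/Im τ). (These are the two defining conditions for H to be an ample Riemann form for the lattice Λ₀, so that ℂ²/Λ₀ is a quasi-abelian variety.) -/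
open Complex

/-- The Hermitian form `H(x,y) = x₁·conj(y₁)/Im τ` on `ℂ²`. -/
noncomputable def hermForm (τ : ℂ) (x y : ℂ × ℂ) : ℂ :=
  x.1 * (starRingEnd ℂ) y.1 / (τ.im : ℂ)

/-! The imaginary part of `H` only sees first coordinates, and these range over the lattice
`ℤ + ℤτ ⊂ ℂ`, on which `Im (z · conj w)` is the integer determinant of `z, w` times `Im τ`. -/

lemma fst_mem_closure_pair_of_mem_Lambda0 {p q : ℝ} {τ : ℂ} {l : ℂ × ℂ}
    (hl : l ∈ Lambda0 p q τ) : l.1 ∈ AddSubgroup.closure ({1, τ} : Set ℂ) := by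
  suffices Lambda0 p q τ ≤ (AddSubgroup.closure ({1, τ} : Set ℂ)).comap (AddMonoidHom.fst ℂ ℂ) from
    this hl
  refine AddSubgroup.closure_le _ |>.mpr ?_
  rintro x (rfl | rfl | rfl)
  · exact zero_mem (AddSubgroup.closure ({1, τ} : Set ℂ))
  · exact AddSubgroup.subset_closure (Set.mem_insert _ _)
  · exact AddSubgroup.subset_closure (Set.mem_insert_of_mem _ rfl)

lemma im_mul_conj_intCast_add_intCast_mul (τ : ℂ) (a b c d : ℤ) :
    ((a + b * τ) * (starRingEnd ℂ) (c + d * τ)).im = (b * c - a * d : ℤ) * τ.im := by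
  simp only [mul_im, add_re, add_im, mul_re, conj_re, conj_im, map_add, map_mul, intCast_re,
    intCast_im, map_intCast]
  push_cast
  ring

lemma exists_int_im_mul_conj_eq {τ z w : ℂ} (hz : z ∈ AddSubgroup.closure ({1, τ} : Set ℂ))
    (hw : w ∈ AddSubgroup.closure ({1, τ} : Set ℂ)) :
    ∃ k : ℤ, (z * (starRingEnd ℂ) w).im = k * τ.im := by
  obtain ⟨a, b, rfl⟩ := AddSubgroup.mem_closure_pair.mp hz
  obtain ⟨c, d, rfl⟩ := AddSubgroup.mem_closure_pair.mp hw
  simp only [zsmul_eq_mul, mul_one]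
  exact ⟨_, im_mul_conj_intCast_add_intCast_mul τ a b c d⟩

lemma hermForm_im (τ : ℂ) (x y : ℂ × ℂ) :
    (hermForm τ x y).im = (x.1 * (starRingEnd ℂ) y.1).im / τ.im := by
  rw [hermForm, div_ofReal_im]

lemma hermForm_self_fst (τ x : ℂ) :
    hermForm τ (x, 0) (x, 0) = ((‖x‖ ^ 2 / τ.im : ℝ) : ℂ) := by
  rw [hermForm, mul_conj, ofReal_div, Complex.sq_norm]

/-- For `p, q ∈ ℝ` and `τ ∈ ℂ` with `Im τ > 0`, the Hermitian form
`H(x,y) = x₁·conj(y₁)/Im τ` satisfies the two defining conditions of an ample Riemann form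
for `Λ₀`: (i) `Im H(λ,μ) ∈ ℤ` for all `λ, μ ∈ Λ₀`; (ii) for every nonzero `x ∈ ℂ`,
`H((x,0),(x,0))` is the positive real number `|x|²/Im τ`.  Hence `ℂ²/Λ₀` is a
quasi-abelian variety. -/
theorem hermForm_ample_riemann (p q : ℝ) (τ : ℂ) (hτ : 0 < τ.im) :
    (∀ l ∈ Lambda0 p q τ, ∀ m ∈ Lambda0 p q τ, ∃ k : ℤ, (hermForm τ l m).im = (k : ℝ)) ∧
    (∀ x : ℂ, x ≠ 0 →
      hermForm τ (x, 0) (x, 0) = ((‖x‖ ^ 2 / τ.im : ℝ) : ℂ) ∧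
      0 < ‖x‖ ^ 2 / τ.im) := by
  refine ⟨fun l hl m hm => ?_, fun x hx => ⟨hermForm_self_fst τ x, by positivity⟩⟩
  obtain ⟨k, hk⟩ := exists_int_im_mul_conj_eq (fst_mem_closure_pair_of_mem_Lambda0 hl)
    (fst_mem_closure_pair_of_mem_Lambda0 hm)
  exact ⟨k, by rw [hermForm_im, hk, mul_div_cancel_right₀ _ hτ.ne']⟩
end

section
/- Let p,q ∈ ℝ and τ ∈ ℂ with Im τ > 0. Let R ⊆ ℂ² be the real span of the three vectors (0,1), (1,p), (τ,q), i.e., R = { x₁·(0,1) + x₂·(1,p) + x₃·(τ,q) : x₁,x₂,x₃ ∈ ℝ }. Then R ∩ (√(-1)·R) = ℂ×{0} = { (x,0) : x ∈ ℂ }. (That is, the maximal ℂ-linear subspace of the ℝ-span of the lattice Λ₀ is ℂ×{0}.) -/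
open Complex

/-- For `p, q ∈ ℝ` and `τ ∈ ℂ` with `Im τ > 0`, let `R ⊆ ℂ²` be the real span of the
vectors `(0,1)`, `(1,p)`, `(τ,q)`.  Then `R ∩ (√(-1)·R) = ℂ×{0}`, i.e., the maximal
`ℂ`-linear subspace of the `ℝ`-span of the lattice `Λ₀` is `ℂ×{0}`. -/
theorem real_span_inter_I_smul (p q : ℝ) (τ : ℂ) (hτ : 0 < τ.im)
    (R : Set (ℂ × ℂ))
    (hR : R = {v : ℂ × ℂ | ∃ x₁ x₂ x₃ : ℝ,
      v = x₁ • (((0 : ℂ), (1 : ℂ)) : ℂ × ℂ) + x₂ • ((1 : ℂ), (p : ℂ)) + x₃ • (τ, (q : ℂ))}) :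
    R ∩ ((fun v : ℂ × ℂ => Complex.I • v) '' R) = {v : ℂ × ℂ | ∃ x : ℂ, v = (x, 0)} := by
  subst hR
  have hτ0 : τ.im ≠ 0 := ne_of_gt hτ
  have hmem : ∀ v : ℂ × ℂ, (∃ x₁ x₂ x₃ : ℝ,
      v = x₁ • (((0 : ℂ), (1 : ℂ)) : ℂ × ℂ) + x₂ • ((1 : ℂ), (p : ℂ)) + x₃ • (τ, (q : ℂ)))
      ↔ v.2.im = 0 := by
    intro v
    constructor
    · rintro ⟨x₁, x₂, x₃, rfl⟩
      simp [Prod.smul_def, Complex.real_smul, Complex.add_im, Complex.mul_im]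
    · intro h
      refine ⟨v.2.re - (v.1.re - v.1.im / τ.im * τ.re) * p - (v.1.im / τ.im) * q,
              v.1.re - v.1.im / τ.im * τ.re, v.1.im / τ.im, ?_⟩
      apply Prod.ext <;> apply Complex.ext <;>
        simp [Prod.smul_def, Complex.real_smul, Complex.add_re, Complex.add_im,
          Complex.mul_re, Complex.mul_im, h] <;> field_simp <;> ring
  ext v
  simp only [Set.mem_inter_iff, Set.mem_image, Set.mem_setOf_eq, hmem]
  constructor
  · rintro ⟨h1, w, hw, rfl⟩
    have h2 : (Complex.I • w).2.im = 0 := h1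
    have hre : w.2.re = 0 := by
      simpa [Prod.smul_def, Complex.mul_im] using h2
    have : w.2 = 0 := Complex.ext hre hw
    exact ⟨Complex.I * w.1, by simp [Prod.smul_def, this]⟩
  · rintro ⟨x, rfl⟩
    refine ⟨by simp, (-Complex.I * x, 0), by simp, ?_⟩
    simp [Prod.smul_def, ← mul_assoc, Complex.I_mul_I]
end

section
/- Let (p,q) ∈ ℝ² satisfy the Diophantine condition and let τ ∈ ℂ with Im τ > 0. Then every entire holomorphic function F : ℂ² → ℂ that is periodic with respect to the three vectors (0,1), (1,p), (τ,q) — i.e., F(z+λ) = F(z) for all z ∈ ℂ² and each λ ∈ {(0,1), (1,p), (τ,q)} — is constant. (Equivalently, the quotient U₀ = ℂ²/Λ₀ admits no non-constant holomorphic function, i.e., U₀ is a toroidal group.) -/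
/-!
Let `c n z` be the `n`-th Fourier coefficient of the `1`-periodic function `t ↦ F (z, t)`.
Differentiating under the integral, each `c n` is entire, and the periods `(1, p)` and `(τ, q)`
give `c n (z + 1) = e(-n p) c n z` and `c n (z + τ) = e(-n q) c n z` where `e(x) = exp(2πix)`.
Hence `‖c n‖` is doubly periodic, so `c n` is bounded and, by Liouville, constant. A nonzero
constant `c n` forces `e(-n p) = e(-n q) = 1`, i.e. `n p, n q ∈ ℤ`, which the Diophantine
condition rules out unless `n = 0`. So `F (z, t) = c 0` for real `t`, and the identity theorem
in the second variable makes `F` constant.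
-/

open Complex

open Function Set Metric Filter MeasureTheory Real Topology

theorem DiophantineCondition.eq_zero_of_mul_eq_int {p q : ℝ} (h : DiophantineCondition p q)
    {n μ ν : ℤ} (hp : n * p = μ) (hq : n * q = ν) : n = 0 := by
  obtain ⟨ϑ, -, A, hA, hbound⟩ := h
  suffices ∀ N : ℕ, ∀ μ ν : ℤ, (N : ℝ) * p = μ → (N : ℝ) * q = ν → N = 0 by
    obtain ⟨N, rfl | rfl⟩ := Int.eq_nat_or_neg n
    · exact_mod_cast this N μ ν (by exact_mod_cast hp) (by exact_mod_cast hq)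
    · have := this N (-μ) (-ν) (by push_cast at hp ⊢; linarith) (by push_cast at hq ⊢; linarith)
      simp [this]
  intro N μ ν hp hq
  by_contra hN
  have hzero : (N : ℂ) * (p + q * I) - (μ + ν * I) = 0 := by
    have hp' : (N : ℂ) * p = μ := by exact_mod_cast hp
    have hq' : (N : ℂ) * q = ν := by exact_mod_cast hq
    linear_combination hp' + I * hq'
  have := hbound N (Nat.pos_of_ne_zero hN) μ ν
  rw [hzero, norm_zero] at this
  exact (mul_pos hA (rpow_pos_of_pos (Nat.cast_pos.2 (Nat.pos_of_ne_zero hN)) _)).not_ge this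

theorem isCompact_range_of_periodic_of_periodic {X : Type*} [TopologicalSpace X] {f : ℂ → X}
    (hf : Continuous f) {τ : ℂ} (hτ : 0 < τ.im) (h₁ : Periodic f 1) (h₂ : Periodic f τ) :
    IsCompact (range f) := by
  set P : ℝ × ℝ → ℂ := fun st => st.1 + st.2 * τ
  have hP : Continuous P := by fun_prop
  suffices range f = f '' (P '' Icc 0 1 ×ˢ Icc 0 1) from
    this ▸ ((isCompact_Icc.prod isCompact_Icc).image hP).image hf
  refine (range_subset_iff.2 fun z => ?_).antisymm (image_subset_range f _)
  set t := z.im / τ.im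
  set s := z.re - t * τ.re
  have hz : z = P (Int.fract s, Int.fract t) + ⌊s⌋ * 1 + ⌊t⌋ * τ := by
    apply Complex.ext <;> simp [P, Int.fract, -Int.self_sub_floor, s, t] <;> field_simp <;> ring
  refine ⟨P (Int.fract s, Int.fract t), mem_image_of_mem P ⟨?_, ?_⟩, ?_⟩
  · exact ⟨Int.fract_nonneg s, (Int.fract_lt_one s).le⟩
  · exact ⟨Int.fract_nonneg t, (Int.fract_lt_one t).le⟩
  · rw [hz, h₂.int_mul, h₁.int_mul]

theorem Differentiable.apply_eq_apply_of_periodic_norm {E : Type*} [NormedAddCommGroup E]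
    [NormedSpace ℂ E] {f : ℂ → E} (hf : Differentiable ℂ f) {τ : ℂ} (hτ : 0 < τ.im)
    (h₁ : Periodic (‖f ·‖) 1) (h₂ : Periodic (‖f ·‖) τ) (z w : ℂ) : f z = f w := by
  obtain ⟨C, hC⟩ :=
    (isCompact_range_of_periodic_of_periodic hf.continuous.norm hτ h₁ h₂).bddAbove
  refine hf.apply_eq_apply_of_bounded (isBounded_iff_forall_norm_le.2 ⟨C, ?_⟩) z w
  rintro _ ⟨x, rfl⟩
  exact hC (mem_range_self x)

theorem differentiable_intervalIntegral_of_continuous_uncurry {E : Type*} [NormedAddCommGroup E]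
    [NormedSpace ℂ E] [CompleteSpace E] {f : ℝ → ℂ → E} (hf : Continuous f.uncurry)
    (hd : ∀ t, Differentiable ℂ (f t)) (a b : ℝ) :
    Differentiable ℂ fun z => ∫ t in a..b, f t z := by
  intro z₀
  obtain ⟨C, hC⟩ := (isCompact_uIcc.prod (isCompact_closedBall z₀ 2)).exists_bound_of_continuousOn
    hf.continuousOn
  have hderiv : ∀ t ∈ uIcc a b, ∀ z ∈ ball z₀ 1, ‖deriv (f t) z‖ ≤ C := by
    intro t ht z hz
    have hsphere : ∀ w ∈ sphere z 1, ‖f t w‖ ≤ C := fun w hw =>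
      hC (t, w) ⟨ht, mem_closedBall.2 <| (dist_triangle w z z₀).trans <| by
        rw [mem_sphere.1 hw]; linarith [mem_ball.1 hz]⟩
    simpa using norm_deriv_le_of_forall_mem_sphere_norm_le one_pos (hd t).diffContOnCl hsphere
  have hslice : ∀ z, Continuous fun t => f t z := fun z =>
    hf.comp (continuous_id.prodMk continuous_const)
  exact (intervalIntegral.hasDerivAt_integral_of_dominated_loc_of_deriv_le
    (F := fun z t => f t z) (ball_mem_nhds z₀ one_pos)
    (Eventually.of_forall fun z => (hslice z).aestronglyMeasurable)
    ((hslice z₀).intervalIntegrable _ _)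
    ((stronglyMeasurable_deriv_with_param hf).comp_measurable
      (measurable_id.prodMk measurable_const)).aestronglyMeasurable
    (ae_of_all _ fun t ht z hz => hderiv t (uIoc_subset_uIcc ht) z hz)
    intervalIntegrable_const
    (ae_of_all _ fun t _ z _ => (hd t z).hasDerivAt)).2.differentiableAt

theorem Differentiable.eq_of_forall_ofReal {E : Type*} [NormedAddCommGroup E] [NormedSpace ℂ E]
    [CompleteSpace E] {f g : ℂ → E} (hf : Differentiable ℂ f) (hg : Differentiable ℂ g)
    (h : ∀ t : ℝ, f t = g t) : f = g := by
  have hreal : Tendsto ((↑) : ℝ → ℂ) (𝓝[≠] 0) (𝓝[≠] 0) :=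
    tendsto_nhdsWithin_of_tendsto_nhds_of_eventually_within _
      ((continuous_ofReal.tendsto' 0 0 ofReal_zero).mono_left nhdsWithin_le_nhds)
      (eventually_nhdsWithin_of_forall fun _ ht => ofReal_ne_zero.2 ht)
  exact (analyticOnNhd_univ_iff_differentiable.2 hf).eq_of_frequently_eq
    (analyticOnNhd_univ_iff_differentiable.2 hg) (hreal.frequently (Frequently.of_forall h))

section AddCircle

variable {T : ℝ} [Fact (0 < T)]

theorem fourierCoeff_comp_sub {E : Type*} [NormedAddCommGroup E] [NormedSpace ℂ E]
    (f : AddCircle T → E) (r : AddCircle T) (n : ℤ) :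
    fourierCoeff (fun t => f (t - r)) n = fourier (-n) r • fourierCoeff f n := by
  simp only [fourierCoeff]
  rw [← integral_smul, ← integral_add_right_eq_self _ r]
  simp only [add_sub_cancel_right, fourier_apply, smul_add, AddCircle.toCircle_add,
    Circle.coe_mul, smul_smul, mul_comm]

theorem fourier_coe_eq_one_iff {n : ℤ} {r : ℝ} :
    fourier n (r : AddCircle T) = 1 ↔ ∃ m : ℤ, n * r = m * T := by
  have hT : (T : ℂ) ≠ 0 := ofReal_ne_zero.2 (Fact.out : 0 < T).ne'
  rw [fourier_coe_apply, Complex.exp_eq_one_iff]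
  refine exists_congr fun m => ?_
  rw [div_eq_iff hT, ← ofReal_intCast, ← ofReal_intCast, ← ofReal_inj (z := (n : ℝ) * r)]
  push_cast
  constructor <;> intro h
  · apply mul_left_cancel₀ two_pi_I_ne_zero
    linear_combination h
  · linear_combination (2 * π * I) * h

theorem ContinuousMap.eq_const_of_fourierCoeff_eq_zero (f : C(AddCircle T, ℂ))
    (h : ∀ n ≠ 0, fourierCoeff f n = 0) (t : AddCircle T) : f t = fourierCoeff f 0 := by
  have hsum : HasSum (fun n => fourierCoeff f n • fourier (T := T) n)
      (fourierCoeff f 0 • fourier 0) :=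
    hasSum_single 0 fun n hn => by rw [h n hn, zero_smul]
  have hf : f = fourierCoeff f 0 • fourier 0 :=
    (hasSum_fourier_series_of_summable (hasSum_single 0 h).summable).unique hsum
  simpa using DFunLike.congr_fun hf t

theorem Function.Periodic.liftIco_coe_apply {B : Type*} {g : ℝ → B} (hg : Periodic g T)
    (a t : ℝ) :
    AddCircle.liftIco T a g t = g t :=
  congrArg hg.lift AddCircle.coe_equivIco

end AddCircle

-- The coefficient `c n z` of the header: `t ↦ F (z, t)` is read on `[0, 1)` and moved to `ℝ / ℤ`.
noncomputable def fourierCoeffSnd (F : ℂ × ℂ → ℂ) (n : ℤ) (z : ℂ) : ℂ :=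
  fourierCoeff (AddCircle.liftIco 1 0 fun t : ℝ => F (z, t)) n

section FourierCoeffSnd

variable {F : ℂ × ℂ → ℂ}

theorem periodic_snd_ofReal (h₀ : ∀ z : ℂ × ℂ, F (z + ((0 : ℂ), (1 : ℂ))) = F z) (z : ℂ) :
    Periodic (fun t : ℝ => F (z, t)) 1 := fun t => by
  simpa using h₀ (z, t)

theorem fourierCoeffSnd_eq_integral (h₀ : ∀ z : ℂ × ℂ, F (z + ((0 : ℂ), (1 : ℂ))) = F z)
    (n : ℤ) (z : ℂ) :
    fourierCoeffSnd F n z = ∫ t in (0 : ℝ)..1, fourier (-n) (t : AddCircle (1 : ℝ)) • F (z, t) := by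
  rw [fourierCoeffSnd, fourierCoeff_eq_intervalIntegral _ n 0, zero_add, div_one, one_smul]
  simp only [(periodic_snd_ofReal h₀ z).liftIco_coe_apply]

theorem differentiable_fourierCoeffSnd (h₀ : ∀ z : ℂ × ℂ, F (z + ((0 : ℂ), (1 : ℂ))) = F z)
    (hF : Differentiable ℂ F) (n : ℤ) : Differentiable ℂ (fourierCoeffSnd F n) := by
  rw [funext (fourierCoeffSnd_eq_integral h₀ n)]
  refine differentiable_intervalIntegral_of_continuous_uncurry ?_ (fun t => ?_) 0 1
  · exact ((fourier (-n)).continuous.comp ((AddCircle.continuous_mk' 1).comp continuous_fst)).smul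
      (hF.continuous.comp (continuous_snd.prodMk (continuous_ofReal.comp continuous_fst)))
  · exact (hF.comp (differentiable_id.prodMk (differentiable_const _))).const_smul
      (fourier (-n) (t : AddCircle (1 : ℝ)))

theorem fourierCoeffSnd_add (h₀ : ∀ z : ℂ × ℂ, F (z + ((0 : ℂ), (1 : ℂ))) = F z) {u : ℂ} {r : ℝ}
    (h : ∀ z : ℂ × ℂ, F (z + (u, (r : ℂ))) = F z) (n : ℤ) (z : ℂ) :
    fourierCoeffSnd F n (z + u) = fourier (-n) (r : AddCircle (1 : ℝ)) * fourierCoeffSnd F n z := by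
  have hshift : AddCircle.liftIco 1 0 (fun t : ℝ => F (z + u, t)) =
      fun s => AddCircle.liftIco 1 0 (fun t : ℝ => F (z, t)) (s - r) := by
    ext s
    induction s using QuotientAddGroup.induction_on with | H t => ?_
    rw [← AddCircle.coe_sub, (periodic_snd_ofReal h₀ _).liftIco_coe_apply,
      (periodic_snd_ofReal h₀ _).liftIco_coe_apply, ← h (z, _)]
    simp
  rw [fourierCoeffSnd, hshift, fourierCoeff_comp_sub, smul_eq_mul, fourierCoeffSnd]

theorem periodic_norm_fourierCoeffSnd (h₀ : ∀ z : ℂ × ℂ, F (z + ((0 : ℂ), (1 : ℂ))) = F z)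
    {u : ℂ} {r : ℝ} (h : ∀ z : ℂ × ℂ, F (z + (u, (r : ℂ))) = F z) (n : ℤ) :
    Periodic (‖fourierCoeffSnd F n ·‖) u := fun z => by
  simp only [fourierCoeffSnd_add h₀ h, norm_mul, fourier_apply, Circle.norm_coe, one_mul]

theorem apply_eq_fourierCoeffSnd_zero (h₀ : ∀ z : ℂ × ℂ, F (z + ((0 : ℂ), (1 : ℂ))) = F z)
    (hF : Continuous F) {z : ℂ} (hz : ∀ n ≠ 0, fourierCoeffSnd F n z = 0) (t : ℝ) :
    F (z, t) = fourierCoeffSnd F 0 z := by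
  have hcont : Continuous (AddCircle.liftIco 1 0 fun t : ℝ => F (z, t)) :=
    AddCircle.liftIco_zero_continuous (by simpa using (periodic_snd_ofReal h₀ z 0).symm)
      (hF.comp (continuous_const.prodMk continuous_ofReal)).continuousOn
  rw [← (periodic_snd_ofReal h₀ z).liftIco_coe_apply 0 t]
  exact ContinuousMap.eq_const_of_fourierCoeff_eq_zero ⟨_, hcont⟩ hz t

end FourierCoeffSnd

/-- If `(p, q)` satisfies the Diophantine condition and `Im τ > 0`, then every entire
holomorphic function `F : ℂ² → ℂ` which is periodic with respect to the three lattice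
vectors `(0,1)`, `(1,p)`, `(τ,q)` is constant; equivalently, `U₀ = ℂ²/Λ₀` admits no
non-constant holomorphic function, i.e., `U₀` is a toroidal group. -/
theorem periodic_entire_function_constant (p q : ℝ) (τ : ℂ)
    (hpq : DiophantineCondition p q) (hτ : 0 < τ.im)
    (F : ℂ × ℂ → ℂ) (hF : Differentiable ℂ F)
    (hper₁ : ∀ z : ℂ × ℂ, F (z + ((0 : ℂ), (1 : ℂ))) = F z)
    (hper₂ : ∀ z : ℂ × ℂ, F (z + ((1 : ℂ), (p : ℂ))) = F z)
    (hper₃ : ∀ z : ℂ × ℂ, F (z + (τ, (q : ℂ))) = F z) :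
    ∃ c : ℂ, ∀ z : ℂ × ℂ, F z = c := by
  set c := fourierCoeffSnd F
  have hconst : ∀ n z, c n z = c n 0 := fun n z =>
    (differentiable_fourierCoeffSnd hper₁ hF n).apply_eq_apply_of_periodic_norm hτ
      (periodic_norm_fourierCoeffSnd hper₁ hper₂ n)
      (periodic_norm_fourierCoeffSnd hper₁ hper₃ n) z 0
  have hvanish : ∀ n ≠ 0, c n 0 = 0 := by
    intro n hn
    by_contra hne
    have hint : ∀ {u : ℂ} {r : ℝ}, (∀ z : ℂ × ℂ, F (z + (u, (r : ℂ))) = F z) →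
        ∃ m : ℤ, ((-n : ℤ) : ℝ) * r = m := fun h => by
      simpa using fourier_coe_eq_one_iff.1 <| (mul_eq_right₀ hne).1 <|
        (fourierCoeffSnd_add hper₁ h n 0).symm.trans (hconst n _)
    obtain ⟨μ, hμ⟩ := hint hper₂
    obtain ⟨ν, hν⟩ := hint hper₃
    exact neg_ne_zero.2 hn (hpq.eq_zero_of_mul_eq_int hμ hν)
  have hreal : ∀ z (t : ℝ), F (z, t) = c 0 0 := fun z t =>
    (apply_eq_fourierCoeffSnd_zero hper₁ hF.continuous
      (fun n hn => (hconst n z).trans (hvanish n hn)) t).trans (hconst 0 z)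
  exact ⟨c 0 0, fun z => congrFun (Differentiable.eq_of_forall_ofReal
    (hF.comp ((differentiable_const z.1).prodMk differentiable_id)) (differentiable_const _)
    (hreal z.1)) z.2⟩
end
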